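/- arXiv:1912.08939 — 6 statements merged into one kernel-verified Lean document; each statement's English description precedes it below -/
import Mathlib

section
/- Let G = (V,E) be a finite, connected, loopless undirected graph with nonempty edge set E that is NOT 3-colorable, let ε ∈ [0,1], and let W¹, W² be deterministic strategies for the two provers in protocol Π²_loc that are well defined at every (i,r) ∈ V × 𝔽₃*: for every vertex i appearing in an edge and every r ∈ 𝔽₃*, all answers W¹(i,r,j,s), W²(i,r,k,t) for (i,j),(i,k) ∈ Edges(i) and s,t ∈ 𝔽₃* coincide; denote this common value W[i,r]. Then the probability, over questions drawn from D'_G with parameter ε, that the check-phase predicate of Π²_loc rejects is at least ε/(4·|E|). (Detection probability of the edge-verification test: the committed colours c_i := 2⁻¹·(W[i,r] + W[i,−r]) cannot form a proper 3-colouring, and a monochromatic edge is caught.) -/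
/-!
Since every prover answers consistently at each `(i, r)`, the sum of its answers at vertex `i` under
the two challenges `1` and `-1` is a colour `c i ∈ 𝔽₃` depending on `i` alone (the paper's
`c_i = 2⁻¹ (W[i,1] + W[i,-1])` up to the unit `2⁻¹`). As `G` is not 3-colourable, some edge `e`
is monochromatic for `c`, and the question pair `((e,1,1), (e,-1,-1))` then fails the
edge-verification test. `D'_G` gives this pair mass at least `ε / (4 |E|)`.
-/

open Finset

/-- The field `𝔽₃` with three elements. -/
abbrev F3 := ZMod 3

/-- The nonzero elements `𝔽₃*` of `𝔽₃`. -/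
abbrev F3s := {x : F3 // x ≠ 0}

/-- Negation on `𝔽₃*`. -/
def F3s.neg (r : F3s) : F3s := ⟨-r.1, by simpa using r.2⟩

/-- A question to a prover: an edge (ordered pair of vertices) together with a
nonzero challenge in `𝔽₃*` for each endpoint. -/
abbrev Question (n : ℕ) := (Fin n × Fin n) × F3s × F3s

/-- The edge set of a simple graph on `Fin n`, each edge written uniquely as an
ordered pair `(i, j)` with `i < j`. -/
def edgeFinset' {n : ℕ} (G : SimpleGraph (Fin n)) [DecidableRel G.Adj] :
    Finset (Fin n × Fin n) :=
  Finset.univ.filter fun e => e.1 < e.2 ∧ G.Adj e.1 e.2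

/-- `edgesAt G i` is the set `Edges(i)` of edges of `G` incident to vertex `i`. -/
def edgesAt {n : ℕ} (G : SimpleGraph (Fin n)) [DecidableRel G.Adj] (i : Fin n) :
    Finset (Fin n × Fin n) :=
  (edgeFinset' G).filter fun e => e.1 = i ∨ e.2 = i

/-- The question distribution `D'_G` with parameter `ε` of protocol `Π²_loc`:
pick `e = (i,j)` uniformly in `E` and `r, s` uniformly and independently in
`𝔽₃*`; with probability `ε` set `(e',r',s') = (e,−r,−s)`; with probability
`1−ε` choose a uniformly random endpoint `h` of `e`, then pick `e'` uniformly in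
`Edges(h)` and `r', s'` uniformly and independently in `𝔽₃*`.
`DprimeG G ε q₁ q₂` is the probability mass of the pair of questions `(q₁, q₂)`. -/
noncomputable def DprimeG {n : ℕ} (G : SimpleGraph (Fin n)) [DecidableRel G.Adj]
    (ε : ℝ) (q₁ q₂ : Question n) : ℝ :=
  (if q₁.1 ∈ edgeFinset' G then (1 : ℝ) / (edgeFinset' G).card else 0) * (1 / 4) *
    (ε * (if q₂ = (q₁.1, F3s.neg q₁.2.1, F3s.neg q₁.2.2) then 1 else 0)
      + (1 - ε) * (1 / 2) *
          ((if q₂.1 ∈ edgesAt G q₁.1.1 then (1 : ℝ) / (edgesAt G q₁.1.1).card else 0)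
            + (if q₂.1 ∈ edgesAt G q₁.1.2 then (1 : ℝ) / (edgesAt G q₁.1.2).card else 0))
        * (1 / 4))

/-- A deterministic strategy of a prover: `W i r j s ∈ 𝔽₃` is the prover's
answer for vertex `i` under challenge `r` when asked the edge `{i,j}` with
challenges `r` for `i` and `s` for `j`. -/
abbrev ProverStrategy (n : ℕ) := Fin n → F3s → Fin n → F3s → F3

/-- The pair of answers `(w_i, w_j) = (W(i,r,j,s), W(j,s,i,r))` a prover using
strategy `W` gives on question `((i,j),r,s)`. -/
def answer {n : ℕ} (W : ProverStrategy n) (q : Question n) : F3 × F3 :=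
  (W q.1.1 q.2.1 q.1.2 q.2.2, W q.1.2 q.2.2 q.1.1 q.2.1)

/-- The two (ordered-pair) edges are distinct and share exactly the vertex
`e.1 = e'.1`. -/
def sharesFst {n : ℕ} (e e' : Fin n × Fin n) : Prop :=
  e.1 = e'.1 ∧ e.2 ≠ e'.2 ∧ e.2 ≠ e'.1 ∧ e.1 ≠ e'.2

/-- The two (ordered-pair) edges are distinct and share exactly the vertex
`e.2 = e'.2`. -/
def sharesSnd {n : ℕ} (e e' : Fin n × Fin n) : Prop :=
  e.2 = e'.2 ∧ e.1 ≠ e'.1 ∧ e.1 ≠ e'.2 ∧ e.2 ≠ e'.1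

/-- The check-phase predicate of protocol `Π²_loc` on question `q₁ = ((i,j),r,s)`
to prover 1 with answers `w = (w_i, w_j)` and question `q₂ = ((i',j'),r',s')` to
prover 2 with answers `w' = (w'_{i'}, w'_{j'})`:
* (edge-verification test) if `(i,j) = (i',j')`, `r' ≠ r` and `s' ≠ s`, then
  `w_i + w'_i ≠ w_j + w'_j`;
* (well-definition test) if `(i,j) = (i',j')` and (`r' = r` or `s' = s`), then
  (`w_i = w'_i` or `r ≠ r'`) and (`w_j = w'_j` or `s ≠ s'`);
* if the edges are distinct and share exactly the vertex `i = i'` and `r = r'`,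
  then `w_i = w'_{i'}`;
* if the edges are distinct and share exactly the vertex `j = j'` and `s = s'`,
  then `w_j = w'_{j'}`;
* in all remaining cases the verifier accepts. -/
def accepts {n : ℕ} (q₁ q₂ : Question n) (w w' : F3 × F3) : Prop :=
  ((q₁.1 = q₂.1 ∧ q₂.2.1 ≠ q₁.2.1 ∧ q₂.2.2 ≠ q₁.2.2) →
      w.1 + w'.1 ≠ w.2 + w'.2)
  ∧ ((q₁.1 = q₂.1 ∧ (q₂.2.1 = q₁.2.1 ∨ q₂.2.2 = q₁.2.2)) →
      ((w.1 = w'.1 ∨ q₁.2.1 ≠ q₂.2.1) ∧ (w.2 = w'.2 ∨ q₁.2.2 ≠ q₂.2.2)))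
  ∧ ((sharesFst q₁.1 q₂.1 ∧ q₁.2.1 = q₂.2.1) → w.1 = w'.1)
  ∧ ((sharesSnd q₁.1 q₂.1 ∧ q₁.2.2 = q₂.2.2) → w.2 = w'.2)

instance {n : ℕ} (q₁ q₂ : Question n) (w w' : F3 × F3) :
    Decidable (accepts q₁ q₂ w w') := by
  unfold accepts sharesFst sharesSnd; infer_instance

/-- `G` is 3-colorable: a proper colouring `c : V → 𝔽₃`. -/
def ThreeColorable {n : ℕ} (G : SimpleGraph (Fin n)) [DecidableRel G.Adj] : Prop :=
  ∃ c : Fin n → F3, ∀ e ∈ edgeFinset' G, c e.1 ≠ c e.2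

namespace F3s

def one : F3s := ⟨1, one_ne_zero⟩

lemma neg_ne_self (r : F3s) : r.neg ≠ r := by
  revert r
  decide

end F3s

lemma single_le_sum_sum {α β M : Type*} [Fintype α] [Fintype β] [AddCommMonoid M] [PartialOrder M]
    [IsOrderedAddMonoid M] {f : α → β → M} (hf : ∀ a b, 0 ≤ f a b) (a : α) (b : β) :
    f a b ≤ ∑ a, ∑ b, f a b :=
  (single_le_sum (fun b _ => hf a b) (mem_univ b)).trans
    (single_le_sum (fun a _ => sum_nonneg fun b _ => hf a b) (mem_univ a))

section Distribution

variable {n : ℕ} (G : SimpleGraph (Fin n)) [DecidableRel G.Adj] {ε : ℝ}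

lemma DprimeG_nonneg (hε : ε ∈ Set.Icc (0 : ℝ) 1) (q₁ q₂ : Question n) :
    0 ≤ DprimeG G ε q₁ q₂ := by
  obtain ⟨hε0, hε1⟩ := hε
  have h1ε : 0 ≤ 1 - ε := sub_nonneg.2 hε1
  unfold DprimeG
  split_ifs <;> positivity

lemma le_DprimeG_neg (hε : ε ∈ Set.Icc (0 : ℝ) 1) {e : Fin n × Fin n}
    (he : e ∈ edgeFinset' G) (r s : F3s) :
    ε / (4 * #(edgeFinset' G)) ≤ DprimeG G ε (e, r, s) (e, r.neg, s.neg) := by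
  obtain ⟨hε0, hε1⟩ := hε
  have h1ε : 0 ≤ 1 - ε := sub_nonneg.2 hε1
  unfold DprimeG
  rw [if_pos he, if_pos rfl, mul_one]
  calc ε / (4 * #(edgeFinset' G)) = 1 / #(edgeFinset' G) * (1 / 4) * ε := by ring
    _ ≤ _ := by
      gcongr
      refine le_add_of_nonneg_right ?_
      split_ifs <;> positivity

end Distribution

lemma not_accepts_of_add_eq {n : ℕ} {q₁ q₂ : Question n} {w w' : F3 × F3}
    (he : q₁.1 = q₂.1) (hr : q₂.2.1 ≠ q₁.2.1) (hs : q₂.2.2 ≠ q₁.2.2)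
    (hw : w.1 + w'.1 = w.2 + w'.2) : ¬ accepts q₁ q₂ w w' :=
  fun h => h.1 ⟨he, hr, hs⟩ hw

section Colouring

variable {n : ℕ} (G : SimpleGraph (Fin n)) [DecidableRel G.Adj]

noncomputable def committedColour (W : ProverStrategy n) (i : Fin n) : F3 :=
  if h : ∃ j, G.Adj i j then W i F3s.one h.choose F3s.one + W i F3s.one.neg h.choose F3s.one
  else 0

lemma committedColour_eq {W₁ W₂ : ProverStrategy n}
    (hwd : ∀ (i : Fin n) (r : F3s) (j k : Fin n) (s t : F3s),
      G.Adj i j → G.Adj i k → W₁ i r j s = W₂ i r k t)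
    {i j : Fin n} (hij : G.Adj i j) :
    committedColour G W₁ i = W₁ i F3s.one j F3s.one + W₂ i F3s.one.neg j F3s.one.neg := by
  have hex : ∃ k, G.Adj i k := ⟨j, hij⟩
  rw [committedColour, dif_pos hex, hwd i _ _ j _ F3s.one hex.choose_spec hij,
    ← hwd i _ j j _ _ hij hij, hwd i _ _ j _ F3s.one.neg hex.choose_spec hij]

end Colouring

theorem edge_verification_test_detection_general {n : ℕ}
    (G : SimpleGraph (Fin n)) [DecidableRel G.Adj]
    (h3col : ¬ ThreeColorable G)
    (ε : ℝ) (hε : ε ∈ Set.Icc (0 : ℝ) 1)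
    (W₁ W₂ : ProverStrategy n)
    (hwd : ∀ (i : Fin n) (r : F3s) (j k : Fin n) (s t : F3s),
      G.Adj i j → G.Adj i k → W₁ i r j s = W₂ i r k t) :
    ε / (4 * (edgeFinset' G).card)
      ≤ ∑ q₁ : Question n, ∑ q₂ : Question n,
          DprimeG G ε q₁ q₂ *
            (if accepts q₁ q₂ (answer W₁ q₁) (answer W₂ q₂) then (0 : ℝ) else 1) := by
  obtain ⟨e, he, hmono⟩ : ∃ e ∈ edgeFinset' G,
      committedColour G W₁ e.1 = committedColour G W₁ e.2 := by
    by_contra! hproper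
    exact h3col ⟨_, hproper⟩
  have hadj : G.Adj e.1 e.2 := (mem_filter.1 he).2.2
  set q₁ : Question n := (e, F3s.one, F3s.one)
  set q₂ : Question n := (e, F3s.one.neg, F3s.one.neg)
  have hrej : ¬ accepts q₁ q₂ (answer W₁ q₁) (answer W₂ q₂) :=
    not_accepts_of_add_eq rfl (F3s.neg_ne_self _) (F3s.neg_ne_self _) <| by
      rw [answer, answer, ← committedColour_eq G hwd hadj, ← committedColour_eq G hwd hadj.symm,
        hmono]
  calc ε / (4 * (edgeFinset' G).card) ≤ DprimeG G ε q₁ q₂ := le_DprimeG_neg G hε he _ _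
    _ = DprimeG G ε q₁ q₂ *
          (if accepts q₁ q₂ (answer W₁ q₁) (answer W₂ q₂) then (0 : ℝ) else 1) := by
      rw [if_neg hrej, mul_one]
    _ ≤ _ := single_le_sum_sum
          (f := fun a b => DprimeG G ε a b *
            (if accepts a b (answer W₁ a) (answer W₂ b) then (0 : ℝ) else 1))
          (fun a b => mul_nonneg (DprimeG_nonneg G hε a b) (by split_ifs <;> norm_num)) q₁ q₂

/-- **Detection probability of the edge-verification test.**
Let `G = (V,E)` be a finite, connected, loopless undirected graph with nonempty
edge set that is not 3-colorable, let `ε ∈ [0,1]`, and let `W₁, W₂` be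
deterministic strategies for the two provers of `Π²_loc` that are well defined
at every `(i, r)`: for every vertex `i`, challenge `r ∈ 𝔽₃*`, edges
`(i,j), (i,k) ∈ Edges(i)` and challenges `s, t ∈ 𝔽₃*`, the answers
`W₁(i,r,j,s)` and `W₂(i,r,k,t)` coincide.  Then the probability, over questions
drawn from `D'_G` with parameter `ε`, that the check-phase predicate rejects is
at least `ε/(4·|E|)`. -/
theorem edge_verification_test_detection {n : ℕ}
    (G : SimpleGraph (Fin n)) [DecidableRel G.Adj]
    (hconn : G.Connected) (hE : (edgeFinset' G).Nonempty)
    (h3col : ¬ ThreeColorable G)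
    (ε : ℝ) (hε : ε ∈ Set.Icc (0 : ℝ) 1)
    (W₁ W₂ : ProverStrategy n)
    (hwd : ∀ (i : Fin n) (r : F3s) (j k : Fin n) (s t : F3s),
      G.Adj i j → G.Adj i k → W₁ i r j s = W₂ i r k t) :
    ε / (4 * (edgeFinset' G).card)
      ≤ ∑ q₁ : Question n, ∑ q₂ : Question n,
          DprimeG G ε q₁ q₂ *
            (if accepts q₁ q₂ (answer W₁ q₁) (answer W₂ q₂) then (0 : ℝ) else 1) :=
  edge_verification_test_detection_general G h3col ε hε W₁ W₂ hwd
end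

section
/- Let G be a simple graph and let e₁, e₂, e₃ be (not necessarily distinct) edges of G. If u and v are distinct vertices such that u is an endpoint of at least two of the edges e₁, e₂, e₃ (counting indices) and v is an endpoint of at least two of the edges e₁, e₂, e₃ (counting indices), then the unordered pair {u,v} equals one of e₁, e₂, e₃; in particular u and v are adjacent in G. (Zero-knowledge core lemma: any two vertices whose colours can be implicitly unveiled from three edge-questions must form an edge of G.) -/
open Finset

/-- By pigeonhole, some index `a` has both `u` and `v` in `e a`, and an edge containing two
distinct vertices is determined by them. -/
theorem Sym2.exists_eq_mk_of_card_lt_card_add_card {ι V : Type*} [Fintype ι] [DecidableEq V]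
    (e : ι → Sym2 V) {u v : V} (huv : u ≠ v)
    (h : Fintype.card ι < #{a | u ∈ e a} + #{a | v ∈ e a}) : ∃ a, e a = s(u, v) := by
  classical
  obtain ⟨a, ha⟩ := inter_nonempty_of_card_lt_card_add_card (subset_univ _) (subset_univ _) h
  simp only [mem_inter, mem_filter, mem_univ, true_and] at ha
  exact ⟨a, (Sym2.mem_and_mem_iff huv).mp ha⟩

/-- **Zero-knowledge core lemma (two unveiled vertices form an edge).**
Let `G` be a simple graph and `e₁, e₂, e₃` (indexed by `Fin 3`, not necessarily
distinct) be edges of `G`.  If `u ≠ v` are vertices each of which is an endpoint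
of at least two of the three edges (counting indices), then the unordered pair
`s(u,v)` equals one of the three edges; in particular `u` and `v` are adjacent. -/
theorem two_unveiled_vertices_form_edge {V : Type*} [DecidableEq V]
    (G : SimpleGraph V) (e : Fin 3 → Sym2 V)
    (he : ∀ a, e a ∈ G.edgeSet) (u v : V) (huv : u ≠ v)
    (hu : 2 ≤ (Finset.univ.filter fun a => u ∈ e a).card)
    (hv : 2 ≤ (Finset.univ.filter fun a => v ∈ e a).card) :
    (∃ a, e a = s(u, v)) ∧ G.Adj u v := by
  obtain ⟨a, ha⟩ := Sym2.exists_eq_mk_of_card_lt_card_add_card e huv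
    (by rw [Fintype.card_fin]; omega)
  exact ⟨⟨a, ha⟩, G.mem_edgeSet.mp (ha ▸ he a)⟩
end

section
/- Let G be a simple graph and let e₁, e₂, e₃ be (not necessarily distinct) edges of G. Let S be the set of vertices that are endpoints of at least two of the edges e₁, e₂, e₃ (counting indices). Then |S| ≤ 3, and if |S| = 3 then the three vertices of S are pairwise adjacent in G, i.e., they form a triangle. (Zero-knowledge core lemma: three edge-questions can unveil the colours of at most three vertices, and three vertices only when they form a triangle of G.) -/
open Finset

/-!
Each edge has at most two endpoints, so the three edges carry at most six incidences; a vertex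
counted at least twice uses up two of them, hence at most three such vertices exist. Two such
vertices lie on two of the three edges each, so by pigeonhole some edge contains both of them,
and that edge is then exactly the pair, which makes them adjacent.
-/

section

variable {ι V : Type*} [Fintype ι] [DecidableEq V]

def sharedEndpoints (e : ι → Sym2 V) : Set V := {v | 2 ≤ #{a | v ∈ e a}}

lemma card_filter_mem_sym2_le_two (s : Finset V) (z : Sym2 V) : #{v ∈ s | v ∈ z} ≤ 2 :=
  calc #{v ∈ s | v ∈ z} ≤ #z.toFinset :=
        card_le_card fun v hv => Sym2.mem_toFinset.mpr (mem_filter.mp hv).2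
    _ ≤ 2 := by rw [Sym2.card_toFinset]; split_ifs <;> omega

lemma sharedEndpoints_finite (e : ι → Sym2 V) : (sharedEndpoints e).Finite := by
  refine (univ.biUnion fun a => (e a).toFinset).finite_toSet.subset fun v hv => ?_
  obtain ⟨a, ha⟩ := card_pos.mp (lt_of_lt_of_le two_pos hv)
  simp only [coe_biUnion, coe_univ, Set.mem_univ, Set.iUnion_true, Set.mem_iUnion, mem_coe,
    Sym2.mem_toFinset]
  exact ⟨a, (mem_filter.mp ha).2⟩

lemma ncard_sharedEndpoints_le (e : ι → Sym2 V) :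
    (sharedEndpoints e).ncard ≤ Fintype.card ι := by
  rw [Set.ncard_eq_toFinset_card _ (sharedEndpoints_finite e), ← card_univ]
  refine Nat.le_of_mul_le_mul_right (c := 2) ?_ two_pos
  exact card_mul_le_card_mul (fun v a => v ∈ e a)
    (fun v hv => (sharedEndpoints_finite e).mem_toFinset.mp hv)
    (fun a _ => card_filter_mem_sym2_le_two _ (e a))

lemma exists_mem_mem_of_mem_sharedEndpoints (hι : Fintype.card ι ≤ 3) {e : ι → Sym2 V}
    {u w : V} (hu : u ∈ sharedEndpoints e) (hw : w ∈ sharedEndpoints e) :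
    ∃ a, u ∈ e a ∧ w ∈ e a := by
  classical
  have hunion : #(({a | u ∈ e a} : Finset ι) ∪ ({a | w ∈ e a} : Finset ι)) ≤ 3 :=
    (card_le_univ _).trans hι
  have hinter := card_union_add_card_inter ({a | u ∈ e a} : Finset ι) {a | w ∈ e a}
  obtain ⟨a, ha⟩ : (({a | u ∈ e a} : Finset ι) ∩ ({a | w ∈ e a} : Finset ι)).Nonempty := by
    rw [← card_pos]
    change 2 ≤ _ at hu hw
    omega
  simp only [mem_inter, mem_filter, mem_univ, true_and] at ha
  exact ⟨a, ha⟩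

lemma SimpleGraph.adj_of_mem_sharedEndpoints (G : SimpleGraph V) {e : ι → Sym2 V}
    (he : ∀ a, e a ∈ G.edgeSet) (hι : Fintype.card ι ≤ 3) {u w : V}
    (hu : u ∈ sharedEndpoints e) (hw : w ∈ sharedEndpoints e) (huw : u ≠ w) : G.Adj u w := by
  obtain ⟨a, hua, hwa⟩ := exists_mem_mem_of_mem_sharedEndpoints hι hu hw
  rw [← SimpleGraph.mem_edgeSet, ← (Sym2.mem_and_mem_iff huw).mp ⟨hua, hwa⟩]
  exact he a

end

/-- **Zero-knowledge core lemma (at most three vertices unveiled, three only if a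
triangle).**  Let `G` be a simple graph and `e₁, e₂, e₃` (indexed by `Fin 3`,
not necessarily distinct) be edges of `G`, and let `S` be the set of vertices
that are endpoints of at least two of the three edges (counting indices).  Then
`|S| ≤ 3`, and if `|S| = 3` then the three vertices of `S` are pairwise adjacent
in `G`, i.e. they form a triangle. -/
theorem unveiled_vertices_triangle {V : Type*} [DecidableEq V]
    (G : SimpleGraph V) (e : Fin 3 → Sym2 V)
    (he : ∀ a, e a ∈ G.edgeSet) :
    ({v : V | 2 ≤ (Finset.univ.filter fun a => v ∈ e a).card} : Set V).ncard ≤ 3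
    ∧ (({v : V | 2 ≤ (Finset.univ.filter fun a => v ∈ e a).card} : Set V).ncard = 3 →
        ∀ u ∈ {v : V | 2 ≤ (Finset.univ.filter fun a => v ∈ e a).card},
        ∀ w ∈ {v : V | 2 ≤ (Finset.univ.filter fun a => v ∈ e a).card},
          u ≠ w → G.Adj u w) := by
  have hcard : Fintype.card (Fin 3) ≤ 3 := (Fintype.card_fin 3).le
  exact ⟨(ncard_sharedEndpoints_le e).trans hcard,
    fun _ _ hu _ hw huw => G.adj_of_mem_sharedEndpoints he hcard hu hw huw⟩
end

section
/- Let G be a simple graph on vertex set V, let c : V → 𝔽₃ be a proper 3-colouring of G (c(i) ≠ c(j) whenever i and j are adjacent), and let i, j be adjacent vertices of G. If σ is a uniformly random permutation of 𝔽₃, then the pair (σ(c(i)), σ(c(j))) is uniformly distributed over the set of ordered pairs (x,y) ∈ 𝔽₃ × 𝔽₃ with x ≠ y (a set of six pairs). (The colours unveiled for the two endpoints of an edge in the protocol are two distinct uniformly random colours.) -/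
/-!
The image of the uniform measure on a finite group under an orbit map `g ↦ g • b` is uniform on
the orbit, because each fibre is a left coset of the stabiliser of `b`. Permutations act
transitively on ordered pairs of distinct points, so the orbit of `(c i, c j)` is the whole
off-diagonal as soon as `c i ≠ c j`, which is what properness of `c` gives on the edge `ij`.
-/

open Finset MulAction

namespace PMF

theorem map_uniformOfFintype_eq_uniformOfFinset {α β : Type*} [Fintype α] [Nonempty α]
    [DecidableEq β] (f : α → β) (s : Finset β) (hs : s.Nonempty) (hf : ∀ a, f a ∈ s) (k : ℕ)
    (hk : ∀ x ∈ s, #{a | f a = x} = k) :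
    (uniformOfFintype α).map f = uniformOfFinset s hs := by
  have hcard : Fintype.card α = #s * k := by
    rw [← card_univ, card_eq_sum_card_fiberwise fun a _ => hf a, sum_congr rfl hk, sum_const,
      smul_eq_mul]
  have hk0 : k ≠ 0 := by
    rintro rfl
    exact Fintype.card_ne_zero (hcard.trans (mul_zero _))
  ext x
  rw [map_apply, tsum_fintype]
  simp only [uniformOfFintype_apply, uniformOfFinset_apply]
  rw [← sum_filter, sum_const, nsmul_eq_mul]
  by_cases hx : x ∈ s
  · rw [if_pos hx, hcard, Nat.cast_mul, ENNReal.mul_inv (by simp) (by simp), mul_left_comm,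
      filter_congr (fun a _ => eq_comm), hk x hx, ENNReal.mul_inv_cancel (by simpa) (by simp),
      mul_one]
  · have hfx : ∀ a, x ≠ f a := fun a h => hx (h ▸ hf a)
    simp [hx, hfx]

end PMF

namespace MulAction

variable {G β : Type*} [Group G] [MulAction G β]

theorem card_filter_smul_eq_of_mem_orbit [Fintype G] [DecidableEq β] {b x : β}
    (hx : x ∈ orbit G b) : #{g : G | g • b = x} = #{g : G | g • b = b} := by
  obtain ⟨h, rfl⟩ := hx
  refine card_nbij' (h⁻¹ * ·) (h * ·) ?_ ?_ ?_ ?_ <;> intro g hg <;>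
    simp_all [mul_smul]

end MulAction

theorem PMF.map_smul_uniformOfFintype {G β : Type*} [Group G] [MulAction G β] [Fintype G]
    [DecidableEq β] (b : β) (s : Finset β) (hs : s.Nonempty)
    (hsb : ∀ x, x ∈ s ↔ x ∈ orbit G b) :
    (uniformOfFintype G).map (· • b) = uniformOfFinset s hs :=
  map_uniformOfFintype_eq_uniformOfFinset _ s hs (fun g => (hsb _).2 (mem_orbit b g)) _
    fun _ hx => card_filter_smul_eq_of_mem_orbit ((hsb _).1 hx)

namespace Equiv.Perm

variable {α : Type*}

theorem mem_orbit_pair_iff [Finite α] {a b : α} (hab : a ≠ b) (p : α × α) :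
    p ∈ orbit (Perm α) (a, b) ↔ p.1 ≠ p.2 := by
  constructor
  · rintro ⟨σ, rfl⟩
    exact σ.injective.ne hab
  · intro hp
    have inj {x y : α} (hxy : x ≠ y) : Function.Injective ![x, y] := by
      intro i j
      fin_cases i <;> fin_cases j <;> simp [hxy, hxy.symm]
    obtain ⟨σ, hσ⟩ := exists_extending_pair _ _ (inj hab) (inj hp)
    exact ⟨σ, Prod.ext (hσ 0) (hσ 1)⟩

theorem map_apply_pair_uniformOfFintype [Fintype α] [DecidableEq α] {a b : α} (hab : a ≠ b) :
    (PMF.uniformOfFintype (Perm α)).map (fun σ => (σ a, σ b)) =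
      PMF.uniformOfFinset {p : α × α | p.1 ≠ p.2} ⟨(a, b), by simpa using hab⟩ :=
  PMF.map_smul_uniformOfFintype (a, b) _ _ fun p => by
    rw [mem_filter_univ, mem_orbit_pair_iff hab]

end Equiv.Perm

/-- **Edge colours are two distinct uniformly random colours.**
Let `c` be a proper 3-colouring of a simple graph `G` and let `i, j` be adjacent
vertices.  If `σ` is a uniformly random permutation of `𝔽₃` then the pair
`(σ(c i), σ(c j))` is uniformly distributed over the six ordered pairs
`(x, y) ∈ 𝔽₃ × 𝔽₃` with `x ≠ y`. -/
theorem unveiled_edge_colours_uniform {V : Type*} (G : SimpleGraph V)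
    (c : V → ZMod 3) (hc : ∀ u v : V, G.Adj u v → c u ≠ c v)
    (i j : V) (hij : G.Adj i j) :
    PMF.map (fun σ : Equiv.Perm (ZMod 3) => (σ (c i), σ (c j)))
        (PMF.uniformOfFintype (Equiv.Perm (ZMod 3)))
      = PMF.uniformOfFinset
          (Finset.univ.filter fun p : ZMod 3 × ZMod 3 => p.1 ≠ p.2)
          (by decide) :=
  Equiv.Perm.map_apply_pair_uniformOfFintype (hc i j hij)
end

section
/- Let G be a simple graph on vertex set V, let c : V → 𝔽₃ be a proper 3-colouring of G, and let i, j, k be pairwise adjacent vertices of G (a triangle). If σ is a uniformly random permutation of 𝔽₃, then the triple (σ(c(i)), σ(c(j)), σ(c(k))) is uniformly distributed over the set of ordered triples of pairwise distinct elements of 𝔽₃ (a set of six triples). (The colours unveiled for the three vertices of a triangle in the protocol are three distinct colours assigned uniformly at random.) -/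
/-!
Pushing the uniform distribution on a finite group `G` forward along an orbit map `g ↦ g • x`
gives the uniform distribution on the orbit, since every fibre is a left translate of the
fibre over `x`. The permutations of `𝔽₃` act on triples of colours, and the orbit of a triple of
distinct colours consists of all such triples: any two injections `Fin 3 → 𝔽₃` differ by a
permutation.
-/

open Finset

section OrbitMap

variable {G X : Type*} [Group G] [Fintype G] [MulAction G X] [DecidableEq X]

theorem MulAction.card_filter_smul_eq_smul (x : X) (h : G) :
    #{g : G | g • x = h • x} = #{g : G | g • x = x} := by
  refine card_nbij' (h⁻¹ * ·) (h * ·) ?_ ?_ ?_ ?_ <;> intro g hg <;> simp_all [mul_smul]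

theorem MulAction.card_image_smul_mul_card_filter_smul_eq (x : X) :
    #(univ.image (· • x : G → X)) * #{g : G | g • x = x} = Fintype.card G := by
  rw [← card_univ, card_eq_sum_card_image (· • x) univ, sum_const_nat]
  rintro _ hy
  obtain ⟨h, -, rfl⟩ := mem_image.mp hy
  exact MulAction.card_filter_smul_eq_smul x h

theorem PMF.map_smul_uniformOfFintype_s14 (x : X) :
    (PMF.uniformOfFintype G).map (· • x) =
      PMF.uniformOfFinset (univ.image (· • x : G → X)) (univ_nonempty.image _) := by
  ext y
  simp only [PMF.map_apply, tsum_fintype, PMF.uniformOfFinset_apply, PMF.uniformOfFintype_apply,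
    sum_ite, sum_const_zero, add_zero, sum_const, nsmul_eq_mul]
  split_ifs with hy
  · obtain ⟨h, -, rfl⟩ := mem_image.mp hy
    have hstab : #{g : G | g • x = x} ≠ 0 :=
      (card_pos.mpr ⟨1, mem_filter.mpr ⟨mem_univ _, one_smul G x⟩⟩).ne'
    simp only [eq_comm (a := h • x), MulAction.card_filter_smul_eq_smul,
      ← MulAction.card_image_smul_mul_card_filter_smul_eq x, Nat.cast_mul]
    rw [ENNReal.mul_inv (by simp) (by simp), mul_left_comm,
      ENNReal.mul_inv_cancel (by exact_mod_cast hstab) (by simp), mul_one]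
  · have hfibre : #{g : G | y = g • x} = 0 := card_eq_zero.mpr <|
      filter_false_of_mem fun g _ (hg : y = g • x) => hy (hg ▸ mem_image_of_mem _ (mem_univ g))
    rw [hfibre, Nat.cast_zero, zero_mul]

end OrbitMap

theorem Equiv.Perm.image_smul_triple_of_pairwise_ne {α : Type*} [Fintype α] [DecidableEq α]
    {a b d : α} (hab : a ≠ b) (had : a ≠ d) (hbd : b ≠ d) :
    univ.image (fun σ : Perm α => σ • (a, b, d)) =
      univ.filter fun p : α × α × α => p.1 ≠ p.2.1 ∧ p.1 ≠ p.2.2 ∧ p.2.1 ≠ p.2.2 := by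
  have injective_of_pairwise_ne {x y z : α} (hxy : x ≠ y) (hxz : x ≠ z) (hyz : y ≠ z) :
      Function.Injective ![x, y, z] := by
    intro i j; fin_cases i <;> fin_cases j <;> simp [hxy, hxz, hyz, hxy.symm, hxz.symm, hyz.symm]
  ext ⟨p, q, r⟩
  simp only [mem_image, mem_univ, true_and, mem_filter, Prod.smul_mk, Perm.smul_def, Prod.mk.injEq]
  constructor
  · rintro ⟨σ, rfl, rfl, rfl⟩
    simp [hab, had, hbd]
  · rintro ⟨hpq, hpr, hqr⟩
    obtain ⟨σ, hσ⟩ := Perm.exists_extending_pair _ _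
      (injective_of_pairwise_ne hab had hbd) (injective_of_pairwise_ne hpq hpr hqr)
    exact ⟨σ, hσ 0, hσ 1, hσ 2⟩

/-- **Triangle colours are three distinct colours assigned uniformly at random.**
Let `c` be a proper 3-colouring of a simple graph `G` and let `i, j, k` be
pairwise adjacent vertices (a triangle).  If `σ` is a uniformly random
permutation of `𝔽₃` then the triple `(σ(c i), σ(c j), σ(c k))` is uniformly
distributed over the six ordered triples of pairwise distinct elements of `𝔽₃`. -/
theorem unveiled_triangle_colours_uniform {V : Type*} (G : SimpleGraph V)
    (c : V → ZMod 3) (hc : ∀ u v : V, G.Adj u v → c u ≠ c v)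
    (i j k : V) (hij : G.Adj i j) (hik : G.Adj i k) (hjk : G.Adj j k) :
    PMF.map (fun σ : Equiv.Perm (ZMod 3) => (σ (c i), σ (c j), σ (c k)))
        (PMF.uniformOfFintype (Equiv.Perm (ZMod 3)))
      = PMF.uniformOfFinset
          (Finset.univ.filter fun p : ZMod 3 × ZMod 3 × ZMod 3 =>
            p.1 ≠ p.2.1 ∧ p.1 ≠ p.2.2 ∧ p.2.1 ≠ p.2.2)
          (by decide) := by
  calc _ = (PMF.uniformOfFintype (Equiv.Perm (ZMod 3))).map (· • (c i, c j, c k)) := rfl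
    _ = _ := PMF.map_smul_uniformOfFintype_s14 _
    _ = _ := by
      congr 1
      exact Equiv.Perm.image_smul_triple_of_pairwise_ne (hc i j hij) (hc i k hik) (hc j k hjk)
end

section
/- Let G = (V,E) be a finite, connected, loopless undirected graph with nonempty edge set E, let c : V → 𝔽₃ be a proper 3-colouring of G (c(i) ≠ c(j) for every edge (i,j) ∈ E), and let b : V → 𝔽₃ be arbitrary masks. Define the honest strategy W(i,r,j,s) = b(i)·r + c(i) for every edge {i,j} ∈ E and r, s ∈ 𝔽₃*, used by both provers. Then for every pair of questions ((i,j),r,s) and ((i',j'),r',s') with (i,j), (i',j') ∈ E and r, s, r', s' ∈ 𝔽₃*, the check-phase predicate of protocol Π²_loc accepts the honest answers. (Perfect completeness of Π²_loc: honest provers holding a valid 3-colouring are accepted with probability 1.) -/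
open Finset

lemma F3s.eq_neg_of_ne {r r' : F3s} (h : r' ≠ r) : r'.1 = -r.1 := by
  obtain ⟨r, hr⟩ := r
  obtain ⟨r', hr'⟩ := r'
  replace h : r' ≠ r := fun e => h (Subtype.ext e)
  revert r r'
  decide

lemma ZMod.mul_add_add_mul_neg_add_eq_neg (β γ r : ZMod 3) :
    (β * r + γ) + (β * -r + γ) = -γ := by
  linear_combination (ZMod.natCast_self 3) * γ

def honestAnswer {n : ℕ} (b c : Fin n → F3) (q : Question n) : F3 × F3 :=
  (b q.1.1 * q.2.1.1 + c q.1.1, b q.1.2 * q.2.2.1 + c q.1.2)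

lemma answer_eq_honestAnswer {n : ℕ} {G : SimpleGraph (Fin n)} [DecidableRel G.Adj]
    {b c : Fin n → F3} {W : ProverStrategy n}
    (hW : ∀ (i : Fin n) (r : F3s) (j : Fin n) (s : F3s),
      G.Adj i j → W i r j s = b i * r.1 + c i)
    {q : Question n} (hq : q.1 ∈ edgeFinset' G) :
    answer W q = honestAnswer b c q := by
  have hadj : G.Adj q.1.1 q.1.2 := (Finset.mem_filter.1 hq).2.2
  simp only [answer, honestAnswer, hW _ _ _ _ hadj, hW _ _ _ _ hadj.symm]

/-- On a common vertex with a common challenge the honest answers agree, so only the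
edge-verification test has content: answering `(e, r, s)` and `(e, -r, -s)` sums at each
endpoint to minus its colour, and the colours of the endpoints differ. -/
lemma accepts_honestAnswer {n : ℕ} (b c : Fin n → F3) (q₁ q₂ : Question n)
    (hc : c q₁.1.1 ≠ c q₁.1.2) :
    accepts q₁ q₂ (honestAnswer b c q₁) (honestAnswer b c q₂) := by
  obtain ⟨⟨i, j⟩, r, s⟩ := q₁
  obtain ⟨⟨i', j'⟩, r', s'⟩ := q₂
  dsimp only at hc
  refine ⟨?edgeVerification, ?wellDefinition, ?sharedFst, ?sharedSnd⟩
  case edgeVerification =>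
    rintro ⟨he, hr, hs⟩
    dsimp only at he hr hs
    obtain ⟨rfl, rfl⟩ := Prod.mk.inj he
    simp only [honestAnswer, F3s.eq_neg_of_ne hr, F3s.eq_neg_of_ne hs,
      ZMod.mul_add_add_mul_neg_add_eq_neg]
    exact neg_injective.ne hc
  case wellDefinition =>
    rintro ⟨he, -⟩
    dsimp only at he
    obtain ⟨rfl, rfl⟩ := Prod.mk.inj he
    exact ⟨(eq_or_ne r r').imp (by rintro rfl; rfl) id,
      (eq_or_ne s s').imp (by rintro rfl; rfl) id⟩
  case sharedFst =>
    rintro ⟨⟨hi, -⟩, hr⟩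
    dsimp only at hi hr
    simp only [honestAnswer, hi, hr]
  case sharedSnd =>
    rintro ⟨⟨hj, -⟩, hs⟩
    dsimp only at hj hs
    simp only [honestAnswer, hj, hs]

theorem completeness_two_prover_local_general {n : ℕ}
    (G : SimpleGraph (Fin n)) [DecidableRel G.Adj]
    (c : Fin n → F3) (hc : ∀ e ∈ edgeFinset' G, c e.1 ≠ c e.2)
    (b : Fin n → F3)
    (W : ProverStrategy n)
    (hW : ∀ (i : Fin n) (r : F3s) (j : Fin n) (s : F3s),
      G.Adj i j → W i r j s = b i * r.1 + c i) :
    ∀ q₁ q₂ : Question n, q₁.1 ∈ edgeFinset' G → q₂.1 ∈ edgeFinset' G →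
      accepts q₁ q₂ (answer W q₁) (answer W q₂) := by
  intro q₁ q₂ h₁ h₂
  rw [answer_eq_honestAnswer hW h₁, answer_eq_honestAnswer hW h₂]
  exact accepts_honestAnswer b c q₁ q₂ (hc q₁.1 h₁)

/-- **Perfect completeness of `Π²_loc`.**
Let `G = (V,E)` be a finite, connected, loopless undirected graph with nonempty
edge set, `c : V → 𝔽₃` a proper 3-colouring of `G` and `b : V → 𝔽₃` arbitrary
masks, and let both provers use the honest strategy
`W(i,r,j,s) = b(i)·r + c(i)` (defined on every edge `{i,j} ∈ E`).  Then for
every pair of questions `((i,j),r,s)` and `((i',j'),r',s')` with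
`(i,j), (i',j') ∈ E`, the check-phase predicate of `Π²_loc` accepts the honest
answers. -/
theorem completeness_two_prover_local {n : ℕ}
    (G : SimpleGraph (Fin n)) [DecidableRel G.Adj]
    (hconn : G.Connected) (hE : (edgeFinset' G).Nonempty)
    (c : Fin n → F3) (hc : ∀ e ∈ edgeFinset' G, c e.1 ≠ c e.2)
    (b : Fin n → F3)
    (W : ProverStrategy n)
    (hW : ∀ (i : Fin n) (r : F3s) (j : Fin n) (s : F3s),
      G.Adj i j → W i r j s = b i * r.1 + c i) :
    ∀ q₁ q₂ : Question n, q₁.1 ∈ edgeFinset' G → q₂.1 ∈ edgeFinset' G →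
      accepts q₁ q₂ (answer W q₁) (answer W q₂) :=
  completeness_two_prover_local_general G c hc b W hW
end
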